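/- arXiv:1303.4212 — 4 statements merged into one kernel-verified Lean document; each statement's English description precedes it below -/
import Mathlib

section
/- Let A ∈ 𝒢(Z,C) be nonempty. Then 0⁺A = {z ∈ Z : for every z* ∈ C⁻∖{0}, either σ(z*|A) = +∞ or z*(z) ≤ 0}. Consequently, for every A ∈ 𝒢(Z,C), either A = ∅ or 0⁺A = ⋂ {{z ∈ Z : z*(z) ≤ 0} : z* ∈ C⁻∖{0} with σ(z*|A) ∈ ℝ} (the intersection over the empty family being Z). -/
/-
Both inclusions are elementary once `A` is known to be closed, convex and stable under adding `C`.
If `A + {z} ⊆ A` then `a + n • z ∈ A` for all `n`, so any `z*` with `z*(z) > 0` is unbounded above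
on `A`. Conversely, if `a + z ∉ A` for some `a ∈ A`, Hahn–Banach separates `a + z` from `A` by a
functional `z*` bounded above on `A` with `z*(z) > 0`; since `A + C ⊆ A` and `C` is a cone, that
bound forces `z*(c) ≤ 0` on `C`, so `z* ∈ C⁻ \ {0}` has finite support value and violates the
condition on `z`.
-/

open Set Pointwise

noncomputable section

variable {Z : Type*} [AddCommGroup Z] [Module ℝ Z] [TopologicalSpace Z]

/-- The inf-residual `A ⊖ B = {z : B + {z} ⊆ A}`. -/
def resid (A B : Set Z) : Set Z := {z : Z | B + {z} ⊆ A}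

/-- The recession cone `0⁺A`, with the convention `0⁺∅ = ∅`. -/
def recCone (A : Set Z) : Set Z := {z : Z | A.Nonempty ∧ A + {z} ⊆ A}

/-- `A ⊕ B = cl (A + B)`. -/
def oplus (A B : Set Z) : Set Z := closure (A + B)

/-- Membership in `𝒢(Z,C)`: `A = cl co (A + C)`. -/
def IsG (C A : Set Z) : Prop := A = closure (convexHull ℝ (A + C))

/-- The set `C⁻ \ {0}` of nonzero elements of the negative dual cone. -/
def negDualNZ (C : Set Z) : Set (Z →L[ℝ] ℝ) :=
  {p : Z →L[ℝ] ℝ | (∀ c ∈ C, p c ≤ 0) ∧ p ≠ 0}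

/-- `inf {-z*(z) : z ∈ A}` as an extended real. -/
def scal (p : Z →L[ℝ] ℝ) (A : Set Z) : EReal :=
  sInf ((fun z => ((-(p z) : ℝ) : EReal)) '' A)

/-- Support function `σ(z*|A) = sup {z*(z) : z ∈ A}` as an extended real. -/
def suppF (p : Z →L[ℝ] ℝ) (A : Set Z) : EReal :=
  sSup ((fun z => ((p z : ℝ) : EReal)) '' A)

/-- Inf-residuation on the extended reals: `r ⊖ s = inf {t ∈ ℝ : r ≤ s + t}`. -/
def eresid (r s : EReal) : EReal :=
  sInf ((fun t : ℝ => (t : EReal)) '' {t : ℝ | r ≤ s + (t : EReal)})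

variable {X : Type*} [AddCommGroup X] [Module ℝ X]

/-- The scalarization `φ_{f,z*}(x) = inf {-z*(z) : z ∈ f(x)}`. -/
def phi (f : X → Set Z) (p : Z →L[ℝ] ℝ) (x : X) : EReal := scal p (f x)

/-- Convexity for set-valued functions:
`f(t x₁ + (1-t) x₂) ⊇ cl (t f(x₁) + (1-t) f(x₂))`. -/
def ConvexSV (f : X → Set Z) : Prop :=
  ∀ x₁ x₂ : X, ∀ t : ℝ, t ∈ Ioo (0:ℝ) 1 →
    closure (t • f x₁ + (1 - t) • f x₂) ⊆ f (t • x₁ + (1 - t) • x₂)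

/-- The set-valued directional derivative
`f′(x,u) = ⋂_{t₀>0} cl co ⋃_{0<t<t₀} (1/t)•(f(x+tu) ⊖ f(x))`. -/
def sder (f : X → Set Z) (x u : X) : Set Z :=
  ⋂ t₀ ∈ Ioi (0:ℝ), closure (convexHull ℝ
    (⋃ t ∈ Ioo (0:ℝ) t₀, (1 / t) • resid (f (x + t • u)) (f x)))

/-- The scalar Dini derivative `φ′_{f,z*}(x,u) = inf_{t>0} (1/t)(φ(x+tu) ⊖ φ(x))`. -/
def phiDer (f : X → Set Z) (p : Z →L[ℝ] ℝ) (x u : X) : EReal :=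
  ⨅ t ∈ Ioi (0:ℝ), (((1 / t : ℝ)) : EReal) * eresid (phi f p (x + t • u)) (phi f p x)

end

theorem add_nsmul_mem_of_add_singleton_subset {M : Type*} [AddMonoid M] {A : Set M} {z a : M}
    (hz : A + {z} ⊆ A) (ha : a ∈ A) (n : ℕ) : a + n • z ∈ A := by
  induction n with
  | zero => simpa using ha
  | succ n ih => simpa [succ_nsmul, add_assoc] using hz (add_mem_add ih rfl)

section

variable {Z : Type*} [AddCommGroup Z] [Module ℝ Z] [TopologicalSpace Z]

theorem IsG.add_subset {C A : Set Z} (hA : IsG C A) : A + C ⊆ A :=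
  calc A + C ⊆ convexHull ℝ (A + C) := subset_convexHull ℝ _
    _ ⊆ closure (convexHull ℝ (A + C)) := subset_closure
    _ = A := hA.symm

theorem IsG.isClosed {C A : Set Z} (hA : IsG C A) : IsClosed A :=
  hA ▸ isClosed_closure

theorem IsG.convex [IsTopologicalAddGroup Z] [ContinuousSMul ℝ Z] {C A : Set Z} (hA : IsG C A) :
    Convex ℝ A :=
  hA ▸ (convex_convexHull ℝ _).closure

theorem suppF_eq_top_iff {p : Z →L[ℝ] ℝ} {A : Set Z} :
    suppF p A = ⊤ ↔ ∀ u : ℝ, ∃ y ∈ A, u < p y := by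
  rw [suppF, sSup_eq_top]
  constructor
  · intro h u
    obtain ⟨_, ⟨y, hy, rfl⟩, hlt⟩ := h u (EReal.coe_lt_top u)
    exact ⟨y, hy, EReal.coe_lt_coe_iff.mp hlt⟩
  · intro h b hb
    obtain ⟨u, hbu, -⟩ := EReal.exists_between_coe_real hb
    obtain ⟨y, hy, hlt⟩ := h u
    exact ⟨_, mem_image_of_mem _ hy, hbu.trans (EReal.coe_lt_coe_iff.mpr hlt)⟩

theorem suppF_ne_bot {p : Z →L[ℝ] ℝ} {A : Set Z} (hA : A.Nonempty) : suppF p A ≠ ⊥ := by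
  obtain ⟨a, ha⟩ := hA
  exact ne_bot_of_le_ne_bot (EReal.coe_ne_bot _) (le_sSup (mem_image_of_mem _ ha))

theorem suppF_eq_top_of_mem_recCone {p : Z →L[ℝ] ℝ} {A : Set Z} {z : Z} (hz : z ∈ recCone A)
    (hpz : 0 < p z) : suppF p A = ⊤ := by
  obtain ⟨⟨a, ha⟩, hAz⟩ := hz
  refine suppF_eq_top_iff.mpr fun u => ?_
  obtain ⟨n, hn⟩ := exists_nat_gt ((u - p a) / p z)
  refine ⟨a + n • z, add_nsmul_mem_of_add_singleton_subset hAz ha n, ?_⟩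
  have : u - p a < n * p z := (div_lt_iff₀ hpz).mp hn
  simp only [map_add, map_nsmul, nsmul_eq_mul]
  linarith

theorem map_nonpos_of_add_subset_of_le {C A : Set Z} (hCcone : ∀ c ∈ C, ∀ r : ℝ, 0 < r → r • c ∈ C)
    (hAC : A + C ⊆ A) (hAne : A.Nonempty) {p : Z →L[ℝ] ℝ} {u : ℝ} (hpu : ∀ a ∈ A, p a ≤ u) :
    ∀ c ∈ C, p c ≤ 0 := by
  obtain ⟨a, ha⟩ := hAne
  intro c hc
  by_contra! hpc
  set t : ℝ := (u - p a + 1) / p c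
  have ht : 0 < t := div_pos (by linarith [hpu a ha]) hpc
  have hmem := hpu _ (hAC (add_mem_add ha (hCcone c hc t ht)))
  rw [map_add, map_smul, smul_eq_mul, div_mul_cancel₀ _ hpc.ne'] at hmem
  linarith

theorem recCone_eq_of_isG [IsTopologicalAddGroup Z] [ContinuousSMul ℝ Z] [LocallyConvexSpace ℝ Z]
    {C A : Set Z} (hCcone : ∀ c ∈ C, ∀ r : ℝ, 0 < r → r • c ∈ C) (hA : IsG C A)
    (hAne : A.Nonempty) :
    recCone A = {z : Z | ∀ p ∈ negDualNZ C, suppF p A = ⊤ ∨ p z ≤ 0} := by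
  ext z
  refine ⟨fun hz p _ => (le_or_gt (p z) 0).symm.imp_left (suppF_eq_top_of_mem_recCone hz),
    fun hz => ⟨hAne, ?_⟩⟩
  rw [add_singleton]
  rintro _ ⟨a, ha, rfl⟩
  by_contra hnot
  obtain ⟨p, u, hpu, hux⟩ := geometric_hahn_banach_closed_point hA.convex hA.isClosed hnot
  have hpz : 0 < p z := by
    rw [map_add] at hux
    linarith [hpu a ha]
  have hpC := map_nonpos_of_add_subset_of_le hCcone hA.add_subset hAne fun y hy => (hpu y hy).le
  have hp0 : p ≠ 0 := by
    rintro rfl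
    simp at hpz
  rcases hz p ⟨hpC, hp0⟩ with htop | hle
  · obtain ⟨y, hy, hy'⟩ := suppF_eq_top_iff.mp htop u
    linarith [hpu y hy]
  · linarith

end

theorem stmt_1_general
  {Z : Type*} [AddCommGroup Z] [Module ℝ Z] [TopologicalSpace Z]
  [IsTopologicalAddGroup Z] [ContinuousSMul ℝ Z] [LocallyConvexSpace ℝ Z]
  (C : Set Z)
  (hCcone : ∀ c ∈ C, ∀ r : ℝ, 0 < r → r • c ∈ C)
  (A : Set Z) (hA : IsG C A) (hAne : A.Nonempty) :
    recCone A = {z : Z | ∀ p ∈ negDualNZ C, suppF p A = ⊤ ∨ p z ≤ 0}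
    ∧ ∀ B : Set Z, IsG C B → (B = ∅ ∨
        recCone B = ⋂ p ∈ {p | p ∈ negDualNZ C ∧ ∃ r : ℝ, suppF p B = (r : EReal)},
          {z : Z | p z ≤ 0}) := by
  refine ⟨recCone_eq_of_isG hCcone hA hAne, fun B hB => ?_⟩
  rcases B.eq_empty_or_nonempty with hBe | hBne
  · exact Or.inl hBe
  right
  rw [recCone_eq_of_isG hCcone hB hBne]
  ext z
  simp only [mem_ofPred_eq, mem_iInter]
  constructor
  · rintro h p ⟨hp, r, hr⟩
    exact (h p hp).resolve_left (by simp [hr])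
  · intro h p hp
    refine (eq_or_ne (suppF p B) ⊤).imp_right fun htop => h p ⟨hp, ?_⟩
    exact ⟨_, (EReal.coe_toReal htop (suppF_ne_bot hBne)).symm⟩

theorem stmt_1
  {Z : Type*} [AddCommGroup Z] [Module ℝ Z] [TopologicalSpace Z]
  [IsTopologicalAddGroup Z] [ContinuousSMul ℝ Z] [LocallyConvexSpace ℝ Z] [T2Space Z]
  (C : Set Z) (hCclosed : IsClosed C) (hCconv : Convex ℝ C)
  (hCcone : ∀ c ∈ C, ∀ r : ℝ, 0 < r → r • c ∈ C) (hC0 : (0:Z) ∈ C)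
  (A : Set Z) (hA : IsG C A) (hAne : A.Nonempty) :
    recCone A = {z : Z | ∀ p ∈ negDualNZ C, suppF p A = ⊤ ∨ p z ≤ 0}
    ∧ ∀ B : Set Z, IsG C B → (B = ∅ ∨
        recCone B = ⋂ p ∈ {p | p ∈ negDualNZ C ∧ ∃ r : ℝ, suppF p B = (r : EReal)},
          {z : Z | p z ≤ 0}) :=
  stmt_1_general C hCcone A hA hAne
end

section
/- Let f : X → 𝒢(Z,C) be a convex function, x, u ∈ X, and define g : (0,∞) → 𝒢(Z,C) by g(t) = (1/t)·(f(x + tu) ⊖ f(x)). Then for all 0 < s ≤ t one has g(s) ⊇ g(t). -/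
open Set Pointwise

theorem smul_mem_resid_of_convexSV {Z : Type*} [AddCommGroup Z] [Module ℝ Z] [TopologicalSpace Z]
    {X : Type*} [AddCommGroup X] [Module ℝ X] {f : X → Set Z} (hf : ConvexSV f) {x y : X}
    {z : Z} (hz : z ∈ resid (f y) (f x)) {l : ℝ} (hl : l ∈ Ioo (0 : ℝ) 1) :
    l • z ∈ resid (f (l • y + (1 - l) • x)) (f x) := by
  rintro _ ⟨a, ha, _, rfl, rfl⟩
  have haz : a + z ∈ f y := hz (add_mem_add ha rfl)
  -- `a + l • z = l • (a + z) + (1 - l) • a` lies in `l • f y + (1 - l) • f x`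
  refine hf y x l hl (subset_closure ⟨l • (a + z), smul_mem_smul_set haz, (1 - l) • a,
    smul_mem_smul_set ha, ?_⟩)
  simp only [smul_add, sub_smul, one_smul]
  abel

theorem stmt_7_general
  {Z : Type*} [AddCommGroup Z] [Module ℝ Z] [TopologicalSpace Z]
  {X : Type*} [AddCommGroup X] [Module ℝ X]
  (f : X → Set Z) (hf : ConvexSV f) (x u : X)
  (s t : ℝ) (hs : 0 < s) (hst : s ≤ t) :
    (1 / t) • resid (f (x + t • u)) (f x) ⊆ (1 / s) • resid (f (x + s • u)) (f x) := by
  obtain rfl | hlt := hst.eq_or_lt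
  · exact subset_rfl
  have ht : 0 < t := hs.trans hlt
  have hpoint : (s / t) • (x + t • u) + (1 - s / t) • x = x + s • u := by
    rw [smul_add, smul_smul, div_mul_cancel₀ _ ht.ne', sub_smul, one_smul]
    abel
  rintro _ ⟨w, hw, rfl⟩
  refine ⟨(s / t) • w, ?_, ?_⟩
  · rw [← hpoint]
    exact smul_mem_resid_of_convexSV hf hw ⟨div_pos hs ht, (div_lt_one ht).2 hlt⟩
  · change (1 / s) • (s / t) • w = (1 / t) • w
    rw [smul_smul]
    congr 1
    field_simp

theorem stmt_7
  {Z : Type*} [AddCommGroup Z] [Module ℝ Z] [TopologicalSpace Z]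
  [IsTopologicalAddGroup Z] [ContinuousSMul ℝ Z] [LocallyConvexSpace ℝ Z] [T2Space Z]
  {X : Type*} [AddCommGroup X] [Module ℝ X]
  (C : Set Z) (hCclosed : IsClosed C) (hCconv : Convex ℝ C)
  (hCcone : ∀ c ∈ C, ∀ r : ℝ, 0 < r → r • c ∈ C) (hC0 : (0:Z) ∈ C)
  (f : X → Set Z) (hG : ∀ x, IsG C (f x)) (hf : ConvexSV f) (x u : X)
  (s t : ℝ) (hs : 0 < s) (hst : s ≤ t) :
    (1 / t) • resid (f (x + t • u)) (f x) ⊆ (1 / s) • resid (f (x + s • u)) (f x) :=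
  stmt_7_general f hf x u s t hs hst
end

section
/- Let f : X → 𝒢(Z,C) be a convex function and x₀ ∈ dom f. If x₀ solves the strict set-valued Minty inequality (MVI_I): for all x ∈ X, f′(x, x₀−x) ⊇ 0⁺f(x₀) (equivalently, 0 ∈ f′(x, x₀−x) for all x ∈ X), then x₀ solves the strict scalarized Minty inequality (mvi_I): for all x ∈ X and all z* ∈ C⁻∖{0}, φ′_{f,z*}(x, x₀−x) ≤ 0. If additionally the weak regularity condition holds, namely f′(x, x₀−x) = ⋂_{z*∈C⁻∖{0}} {z ∈ Z : φ′_{f,z*}(x, x₀−x) ≤ −z*(z)} for all x ∈ X, then the reverse implication holds as well. -/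
/-!
Both directions rest on one estimate: if `w ∈ f(x + t u) ⊖ f(x)`, then
`φ(x + t u) ≤ φ(x) - z*(w)`, so `φ′(x,u) ≤ -z*(z)` for every `z ∈ f′(x,u)`; taking `z = 0 ∈ 0⁺f(x₀)`
gives `φ′(x, x₀ - x) ≤ 0`. Conversely, under the regularity condition it suffices to show
`φ′(x, x₀ - x) ≤ -z*(z)` for `z ∈ 0⁺f(x₀)`: if `φ(x₀) = -∞` then already `φ′(x, x₀ - x) = -∞`, and
otherwise `φ(x₀)` is finite and `φ(x₀) ≤ φ(x₀) - z*(z)` forces `-z*(z) ≥ 0`.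
-/

open Set Pointwise

section Scalarization

variable {Z : Type*} [AddCommGroup Z] [Module ℝ Z] [TopologicalSpace Z]
variable {X : Type*} [AddCommGroup X] [Module ℝ X]

lemma eresid_le_of_le_add {r s : EReal} {c : ℝ} (h : r ≤ s + (c : EReal)) : eresid r s ≤ c :=
  sInf_le ⟨c, h, rfl⟩

lemma eresid_bot_left (s : EReal) : eresid ⊥ s = ⊥ := by
  refine (EReal.eq_bot_iff_forall_lt _).mpr fun y => ?_
  calc eresid ⊥ s ≤ ((y - 1 : ℝ) : EReal) := eresid_le_of_le_add bot_le
    _ < y := by exact_mod_cast sub_one_lt y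

lemma scal_le_add_of_mem_resid (p : Z →L[ℝ] ℝ) {A B : Set Z} {w : Z} (hw : w ∈ resid B A) :
    scal p B ≤ scal p A + ((-(p w) : ℝ) : EReal) := by
  rw [← EReal.sub_le_iff_le_add (.inl (EReal.coe_ne_bot _)) (.inl (EReal.coe_ne_top _))]
  refine le_sInf ?_
  rintro _ ⟨a, ha, rfl⟩
  refine EReal.sub_le_of_le_add (sInf_le_of_le ⟨a + w, hw (add_mem_add ha rfl), rfl⟩ ?_)
  simp only [map_add, neg_add, EReal.coe_add, le_refl]

lemma phiDer_le_of_mem_resid (f : X → Set Z) (p : Z →L[ℝ] ℝ) (x u : X) {t : ℝ} (ht : 0 < t)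
    {w : Z} (hw : w ∈ resid (f (x + t • u)) (f x)) :
    phiDer f p x u ≤ ((-(p ((1 / t) • w)) : ℝ) : EReal) :=
  calc phiDer f p x u
      ≤ ((1 / t : ℝ) : EReal) * eresid (phi f p (x + t • u)) (phi f p x) := iInf₂_le t ht
    _ ≤ ((1 / t : ℝ) : EReal) * ((-(p w) : ℝ) : EReal) :=
        mul_le_mul_of_nonneg_left (eresid_le_of_le_add (scal_le_add_of_mem_resid p hw))
          (by exact_mod_cast (one_div_pos.mpr ht).le)
    _ = ((-(p ((1 / t) • w)) : ℝ) : EReal) := by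
        rw [← EReal.coe_mul, map_smul, smul_eq_mul, mul_neg]

/- The bound holds on every difference quotient, hence on the closed half-space
`{y | p y ≤ -m}` for each real `m < φ′`, and so on the closed convex hull of the quotients. -/
lemma phiDer_le_of_mem_sder (f : X → Set Z) (p : Z →L[ℝ] ℝ) (x u : X) {z : Z}
    (hz : z ∈ sder f x u) : phiDer f p x u ≤ ((-(p z) : ℝ) : EReal) := by
  by_contra! hlt
  obtain ⟨m, hmz, hmD⟩ := EReal.exists_between_coe_real hlt
  have hquot : (⋃ t ∈ Ioo (0 : ℝ) 1, (1 / t) • resid (f (x + t • u)) (f x)) ⊆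
      {y : Z | p y ≤ -m} := by
    simp only [iUnion_subset_iff]
    rintro t ⟨ht, -⟩ _ ⟨w, hw, rfl⟩
    have : (m : EReal) ≤ ((-(p ((1 / t) • w)) : ℝ) : EReal) :=
      hmD.le.trans (phiDer_le_of_mem_resid f p x u ht hw)
    show p _ ≤ -m
    linarith [EReal.coe_le_coe_iff.mp this]
  have hhalf : IsClosed {y : Z | p y ≤ -m} ∧ Convex ℝ {y : Z | p y ≤ -m} :=
    ⟨isClosed_le p.continuous continuous_const, convex_halfSpace_le p.isLinear (-m)⟩
  have hzm : p z ≤ -m :=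
    closure_minimal (convexHull_min hquot hhalf.2) hhalf.1
      (mem_iInter₂.mp hz 1 (mem_Ioi.mpr one_pos))
  linarith [EReal.coe_lt_coe_iff.mp hmz]

lemma phiDer_eq_bot_of_phi_add_eq_bot (f : X → Set Z) (p : Z →L[ℝ] ℝ) (x u : X)
    (h : phi f p (x + u) = ⊥) : phiDer f p x u = ⊥ := by
  refine eq_bot_iff.mpr ((iInf₂_le (1 : ℝ) one_pos).trans ?_)
  rw [one_smul, h, eresid_bot_left]
  norm_num

lemma neg_nonneg_of_mem_recCone (p : Z →L[ℝ] ℝ) {A : Set Z} (hA : scal p A ≠ ⊥) {z : Z}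
    (hz : z ∈ recCone A) : 0 ≤ -(p z) := by
  obtain ⟨⟨a, ha⟩, hzA⟩ := hz
  have hfin : scal p A ≠ ⊤ := ne_top_of_le_ne_top (EReal.coe_ne_top (-(p a))) (sInf_le ⟨a, ha, rfl⟩)
  have hle : scal p A ≤ scal p A + ((-(p z) : ℝ) : EReal) := scal_le_add_of_mem_resid p hzA
  lift scal p A to ℝ using ⟨hfin, hA⟩ with r
  rw [← EReal.coe_add, EReal.coe_le_coe_iff] at hle
  linarith

end Scalarization

theorem stmt_12_general
  {Z : Type*} [AddCommGroup Z] [Module ℝ Z] [TopologicalSpace Z]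
  {X : Type*} [AddCommGroup X] [Module ℝ X]
  (C : Set Z)
  (f : X → Set Z)
  (x₀ : X) (hx₀ : (f x₀).Nonempty) :
    ((∀ x : X, recCone (f x₀) ⊆ sder f x (x₀ - x)) → (∀ x : X, ∀ p ∈ negDualNZ C, phiDer f p x (x₀ - x) ≤ 0))
    ∧ ((∀ x : X, sder f x (x₀ - x)
          = ⋂ p ∈ negDualNZ C, {z : Z | phiDer f p x (x₀ - x) ≤ ((-(p z) : ℝ) : EReal)}) →
        ((∀ x : X, ∀ p ∈ negDualNZ C, phiDer f p x (x₀ - x) ≤ 0) → (∀ x : X, recCone (f x₀) ⊆ sder f x (x₀ - x)))) := by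
  refine ⟨fun hMVI x p _ => ?_, fun hreg hscal x z hz => ?_⟩
  · have h0 : (0 : Z) ∈ sder f x (x₀ - x) := hMVI x ⟨hx₀, by simp⟩
    simpa using phiDer_le_of_mem_sder f p x (x₀ - x) h0
  · rw [hreg x]
    refine mem_iInter₂.mpr fun p hp => ?_
    show phiDer f p x (x₀ - x) ≤ ((-(p z) : ℝ) : EReal)
    by_cases hbot : phi f p x₀ = ⊥
    · rw [phiDer_eq_bot_of_phi_add_eq_bot f p x (x₀ - x) (by rwa [add_sub_cancel])]
      exact bot_le
    · exact (hscal x p hp).trans (by exact_mod_cast neg_nonneg_of_mem_recCone p hbot hz)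

theorem stmt_12
  {Z : Type*} [AddCommGroup Z] [Module ℝ Z] [TopologicalSpace Z]
  [IsTopologicalAddGroup Z] [ContinuousSMul ℝ Z] [LocallyConvexSpace ℝ Z] [T2Space Z]
  {X : Type*} [AddCommGroup X] [Module ℝ X]
  (C : Set Z) (hCclosed : IsClosed C) (hCconv : Convex ℝ C)
  (hCcone : ∀ c ∈ C, ∀ r : ℝ, 0 < r → r • c ∈ C) (hC0 : (0:Z) ∈ C)
  (hdual : (negDualNZ C).Nonempty)
  (f : X → Set Z) (hG : ∀ x, IsG C (f x)) (hf : ConvexSV f)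
  (x₀ : X) (hx₀ : (f x₀).Nonempty) :
    ((∀ x : X, recCone (f x₀) ⊆ sder f x (x₀ - x)) → (∀ x : X, ∀ p ∈ negDualNZ C, phiDer f p x (x₀ - x) ≤ 0))
    ∧ ((∀ x : X, sder f x (x₀ - x)
          = ⋂ p ∈ negDualNZ C, {z : Z | phiDer f p x (x₀ - x) ≤ ((-(p z) : ℝ) : EReal)}) →
        ((∀ x : X, ∀ p ∈ negDualNZ C, phiDer f p x (x₀ - x) ≤ 0) → (∀ x : X, recCone (f x₀) ⊆ sder f x (x₀ - x)))) :=
  stmt_12_general C f x₀ hx₀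
end

section
/- Let f : X → 𝒢(Z,C) be a convex function and x₀ ∈ dom f. If x₀ solves the set-valued Stampacchia inequality (SVI_M): f(x₀) = Z, or for all x ∈ dom f with f(x) ≠ f(x₀) one has 0 ∉ f′(x₀, x−x₀); or if x₀ satisfies: for all x ∈ dom f with f(x) ≠ f(x₀) there exists z* ∈ C⁻∖{0} such that either (φ_{f,z*}(x₀) = −∞ and φ_{f,z*}(x₀) < φ_{f,z*}(x)) or 0 < φ′_{f,z*}(x₀, x−x₀); then f(x₀) is minimal in f[X], i.e. for all x ∈ X, f(x) ⊇ f(x₀) implies f(x) = f(x₀). -/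
open Set Pointwise

/-!
If `f x₀ ⊆ f x`, convexity of `f` gives `f x₀ ⊆ f (x₀ + t • (x - x₀))` for every `t ∈ (0,1)`,
so `0` lies in every residual `f (x₀ + t • (x - x₀)) ⊖ f x₀` and hence in `f′(x₀, x - x₀)`.
Scalarly, `φ(x) ≤ φ(x₀)`, so the residual `φ(x) ⊖ φ(x₀)` is nonpositive and, taking `t = 1`,
so is `φ′(x₀, x - x₀)`. Either way each alternative of the hypothesis forces `f x = f x₀`.
-/

theorem zero_mem_resid_iff {Z : Type*} [AddCommGroup Z] {A B : Set Z} :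
    (0 : Z) ∈ resid A B ↔ B ⊆ A := by
  simp [resid]

section

variable {Z : Type*} [AddCommGroup Z] [Module ℝ Z] [TopologicalSpace Z]
variable {X : Type*} [AddCommGroup X] [Module ℝ X]

theorem ConvexSV.subset_apply_add_smul_sub {f : X → Set Z} (hf : ConvexSV f) {x₀ x : X}
    (hsub : f x₀ ⊆ f x) {t : ℝ} (ht : t ∈ Ioo (0 : ℝ) 1) :
    f x₀ ⊆ f (x₀ + t • (x - x₀)) := by
  have hx : x₀ + t • (x - x₀) = t • x + (1 - t) • x₀ := by module
  intro a ha
  rw [hx]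
  apply hf x x₀ t ht (subset_closure _)
  have ha' : a = t • a + (1 - t) • a := by module
  rw [ha']
  exact add_mem_add (smul_mem_smul_set (hsub ha)) (smul_mem_smul_set ha)

theorem ConvexSV.zero_mem_sder {f : X → Set Z} (hf : ConvexSV f) {x₀ x : X}
    (hsub : f x₀ ⊆ f x) : (0 : Z) ∈ sder f x₀ (x - x₀) := by
  simp only [sder, mem_iInter, mem_Ioi]
  intro t₀ ht₀
  obtain ⟨t, ht, htt₀⟩ : ∃ t ∈ Ioo (0 : ℝ) 1, t < t₀ :=
    ⟨min t₀ 1 / 2, ⟨by positivity, by linarith [min_le_right t₀ 1]⟩,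
      by linarith [min_le_left t₀ 1, lt_min ht₀ one_pos]⟩
  refine subset_closure (subset_convexHull ℝ _ (mem_iUnion₂.mpr ⟨t, ⟨ht.1, htt₀⟩, ?_⟩))
  exact ⟨0, zero_mem_resid_iff.mpr (hf.subset_apply_add_smul_sub hsub ht), smul_zero _⟩

theorem scal_anti (p : Z →L[ℝ] ℝ) {A B : Set Z} (hAB : A ⊆ B) : scal p B ≤ scal p A :=
  sInf_le_sInf (image_mono hAB)

theorem eresid_nonpos_of_le {r s : EReal} (hrs : r ≤ s) : eresid r s ≤ 0 :=
  sInf_le ⟨0, by simpa using hrs, EReal.coe_zero⟩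

theorem phiDer_le_eresid (f : X → Set Z) (p : Z →L[ℝ] ℝ) (x u : X) :
    phiDer f p x u ≤ eresid (phi f p (x + u)) (phi f p x) := by
  calc phiDer f p x u
      ≤ ((1 / 1 : ℝ) : EReal) * eresid (phi f p (x + (1 : ℝ) • u)) (phi f p x) :=
        iInf₂_le 1 (mem_Ioi.mpr one_pos)
    _ = eresid (phi f p (x + u)) (phi f p x) := by simp

theorem phiDer_nonpos_of_subset {f : X → Set Z} (p : Z →L[ℝ] ℝ) {x₀ x : X}
    (hsub : f x₀ ⊆ f x) : phiDer f p x₀ (x - x₀) ≤ 0 := by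
  have h := phiDer_le_eresid f p x₀ (x - x₀)
  rw [add_sub_cancel] at h
  exact h.trans (eresid_nonpos_of_le (scal_anti p hsub))

end

theorem stmt_15_general
  {Z : Type*} [AddCommGroup Z] [Module ℝ Z] [TopologicalSpace Z]
  {X : Type*} [AddCommGroup X] [Module ℝ X]
  (C : Set Z)
  (f : X → Set Z) (hf : ConvexSV f)
  (x₀ : X) (hx₀ : (f x₀).Nonempty)
  (h : (f x₀ = univ ∨ ∀ x : X, (f x).Nonempty → f x ≠ f x₀ →
      (0:Z) ∉ sder f x₀ (x - x₀))
    ∨ (∀ x : X, (f x).Nonempty → f x ≠ f x₀ → ∃ p ∈ negDualNZ C,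
        (phi f p x₀ = ⊥ ∧ phi f p x₀ < phi f p x) ∨ (0:EReal) < phiDer f p x₀ (x - x₀))) :
    ∀ x : X, f x₀ ⊆ f x → f x = f x₀ := by
  intro x hsub
  by_contra hne
  have hfx : (f x).Nonempty := hx₀.mono hsub
  rcases h with (huniv | hsvi) | hscal
  · rw [huniv] at hsub hne
    exact hne (univ_subset_iff.mp hsub)
  · exact hsvi x hfx hne (hf.zero_mem_sder hsub)
  · obtain ⟨p, -, ⟨-, hlt⟩ | hpos⟩ := hscal x hfx hne
    · exact (scal_anti p hsub).not_gt hlt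
    · exact (phiDer_nonpos_of_subset p hsub).not_gt hpos

theorem stmt_15
  {Z : Type*} [AddCommGroup Z] [Module ℝ Z] [TopologicalSpace Z]
  [IsTopologicalAddGroup Z] [ContinuousSMul ℝ Z] [LocallyConvexSpace ℝ Z] [T2Space Z]
  {X : Type*} [AddCommGroup X] [Module ℝ X]
  (C : Set Z) (hCclosed : IsClosed C) (hCconv : Convex ℝ C)
  (hCcone : ∀ c ∈ C, ∀ r : ℝ, 0 < r → r • c ∈ C) (hC0 : (0:Z) ∈ C)
  (hdual : (negDualNZ C).Nonempty)
  (f : X → Set Z) (hG : ∀ x, IsG C (f x)) (hf : ConvexSV f)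
  (x₀ : X) (hx₀ : (f x₀).Nonempty)
  (h : (f x₀ = univ ∨ ∀ x : X, (f x).Nonempty → f x ≠ f x₀ →
      (0:Z) ∉ sder f x₀ (x - x₀))
    ∨ (∀ x : X, (f x).Nonempty → f x ≠ f x₀ → ∃ p ∈ negDualNZ C,
        (phi f p x₀ = ⊥ ∧ phi f p x₀ < phi f p x) ∨ (0:EReal) < phiDer f p x₀ (x - x₀))) :
    ∀ x : X, f x₀ ⊆ f x → f x = f x₀ :=
  stmt_15_general C f hf x₀ hx₀ h
end
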